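/- Let g be a strictly increasing convex distortion function, set α_j = g(j/n) for j = 0,…,n, and let j ∈ {0,…,n−2} and α ∈ [α_j, α_{j+1}] with α < 1. Then the dual norm of the scaled generalized-ES norm ⟨⟨·⟩⟩_α^{S,g} is given for every x ∈ ℝⁿ by ⟨⟨x⟩⟩_α^{S,g,*} = max{ ‖x‖₁, max_{j+2 ≤ i ≤ n} (1−α)/(1−g((i−1)/n)) Σ_{k=i}^n |x|_(k) }, where ‖x‖₁ = Σ_{i=1}^n |x_i|. -/

import Mathlib

/-!
Only sorted magnitudes matter: `⟨z, x⟩ ≤ ∑ₖ |x|₍ₖ₎ |z|₍ₖ₎` by rearrangement, with equality when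
`z` takes the signs of `x` and places its magnitudes in the order that sorts `|x|`.

Let `M` be the right-hand side. Each tail `∑_{k ≥ i} |x|₍ₖ₎` is at most `M / (1 - α)` times the
coefficient tail `∑_{k ≥ i} c_k = 1 - g(i/n)` (for `i ≤ j` because `g(i/n) ≤ α`, for `i > j` by
the definition of `M`), so summation by parts bounds `⟨z, x⟩` by `M ⟨⟨z⟩⟩`. Conversely `M` is
attained: by the sign vector of `x` (norm `≤ 1` via `t = 1`) and by the vector of constant
magnitude `(1 - α) / (1 - g(i/n))` on the top `n - i` sorted positions of `x` (norm `≤ 1` via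
`t = 0`).
-/

open Finset

/-- The absolute values of the components of `x`, arranged in increasing order:
`absSorted x i` is `|x|_(i+1)` in the paper's notation. -/
noncomputable def absSorted {n : ℕ} (x : Fin n → ℝ) : Fin n → ℝ :=
  fun i => |x (Tuple.sort (fun j => |x j|) i)|

/-- `coeff n g i = g((i+1)/n) - g(i/n)`, the paper's `c_{i+1}`. -/
noncomputable def coeff (n : ℕ) (g : ℝ → ℝ) (i : Fin n) : ℝ :=
  g (((i : ℕ) + 1 : ℝ) / n) - g (((i : ℕ) : ℝ) / n)

/-- The objective function whose infimum over `t` defines the scaled generalized-ES norm. -/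
noncomputable def sgesObj {n : ℕ} (g : ℝ → ℝ) (α : ℝ) (x : Fin n → ℝ) (t : ℝ) : ℝ :=
  t + (1 - α)⁻¹ * ∑ i, coeff n g i * max (absSorted x i - t) 0

/-- The scaled generalized-ES norm `⟨⟨x⟩⟩_α^{S,g}`. -/
noncomputable def sges {n : ℕ} (g : ℝ → ℝ) (α : ℝ) (x : Fin n → ℝ) : ℝ :=
  ⨅ t : ℝ, sgesObj g α x t

/-- The non-scaled generalized-ES norm `⟨⟨x⟩⟩_α^{g} = n(1-α)⟨⟨x⟩⟩_α^{S,g}`. -/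
noncomputable def nges {n : ℕ} (g : ℝ → ℝ) (α : ℝ) (x : Fin n → ℝ) : ℝ :=
  (n : ℝ) * (1 - α) * sges g α x

/-- The dual norm of a (norm) functional `N` on `ℝⁿ`. -/
noncomputable def dualNorm {n : ℕ} (N : (Fin n → ℝ) → ℝ) (y : Fin n → ℝ) : ℝ :=
  sSup {r : ℝ | ∃ x : Fin n → ℝ, N x ≤ 1 ∧ r = ∑ i, x i * y i}

/-- The ordered weighted L1 (OWL) norm. -/
noncomputable def owl {n : ℕ} (w : Fin n → ℝ) (x : Fin n → ℝ) : ℝ :=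
  ∑ i, w i * absSorted x i

section AbsSorted

variable {n : ℕ}

theorem absSorted_nonneg (x : Fin n → ℝ) (k : Fin n) : 0 ≤ absSorted x k :=
  abs_nonneg _

theorem absSorted_monotone (x : Fin n → ℝ) : Monotone (absSorted x) :=
  Tuple.monotone_sort fun m => |x m|

theorem sum_absSorted (x : Fin n → ℝ) : ∑ k, absSorted x k = ∑ m, |x m| :=
  Equiv.sum_comp (Tuple.sort fun m => |x m|) fun m => |x m|

theorem sum_mul_le_sum_absSorted_mul (x z : Fin n → ℝ) :
    ∑ m, z m * x m ≤ ∑ k, absSorted x k * absSorted z k := by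
  set σ := Tuple.sort fun m => |x m|
  set τ := Tuple.sort fun m => |z m|
  have hperm : ∑ m, |x m| * |z m| = ∑ k, absSorted x k * absSorted z ((σ.trans τ.symm) k) := by
    rw [← Equiv.sum_comp σ]
    simp [absSorted, σ, τ]
  have hmonovary : Monovary (absSorted x) (absSorted z) := fun _ _ h =>
    absSorted_monotone x ((absSorted_monotone z).reflect_lt h).le
  calc ∑ m, z m * x m ≤ ∑ m, |x m| * |z m| :=
        sum_le_sum fun m _ => (le_abs_self _).trans (by rw [abs_mul, mul_comm])
    _ ≤ ∑ k, absSorted x k * absSorted z k := hperm ▸ hmonovary.sum_mul_comp_perm_le_sum_mul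

theorem one_sub_mul_sum_Ici_absSorted_le (x : Fin n → ℝ) (i : Fin n) {a β M : ℝ}
    (hM : ∑ m, |x m| ≤ M) (haβ : a ≤ β) (hβ : β ≤ 1) :
    (1 - β) * ∑ k ≥ i, absSorted x k ≤ M * (1 - a) := by
  have hS0 : 0 ≤ ∑ k ≥ i, absSorted x k := sum_nonneg fun k _ => absSorted_nonneg x k
  have hS : ∑ k ≥ i, absSorted x k ≤ ∑ m, |x m| := sum_absSorted x ▸
    sum_le_sum_of_subset_of_nonneg (subset_univ _) fun k _ _ => absSorted_nonneg x k
  calc (1 - β) * ∑ k ≥ i, absSorted x k ≤ (1 - a) * ∑ k ≥ i, absSorted x k :=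
        mul_le_mul_of_nonneg_right (by linarith) hS0
    _ ≤ (1 - a) * M := mul_le_mul_of_nonneg_left (hS.trans hM) (by linarith)
    _ = M * (1 - a) := mul_comm _ _

theorem absSorted_eq_of_abs_eq {z s : Fin n → ℝ} (hs : Monotone s) (σ : Equiv.Perm (Fin n))
    (hz : ∀ m, |z m| = s (σ m)) : absSorted z = s := by
  set τ := Tuple.sort fun m => |z m|
  have hcomp : absSorted z = s ∘ ⇑(τ.trans σ) := funext fun k => hz (τ k)
  have hsorted : Monotone (s ∘ ⇑(τ.trans σ)) := hcomp ▸ absSorted_monotone z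
  rw [hcomp, Tuple.unique_monotone hsorted (f := s) (τ := Equiv.refl _) hs]
  rfl

theorem exists_absSorted_eq_and_sum_mul_eq (x : Fin n → ℝ) {s : Fin n → ℝ} (hs : Monotone s)
    (hs0 : ∀ k, 0 ≤ s k) :
    ∃ z : Fin n → ℝ, absSorted z = s ∧ ∑ m, z m * x m = ∑ k, s k * absSorted x k := by
  set σ := Tuple.sort fun m => |x m|
  set sgn : ℝ → ℝ := fun y => if y < 0 then -1 else 1
  have hsgn_abs (y : ℝ) : |sgn y| = 1 := by simp only [sgn]; split_ifs <;> simp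
  have hsgn_mul (y : ℝ) : sgn y * y = |y| := by
    simp only [sgn]; split_ifs with h
    · rw [abs_of_neg h]; ring
    · rw [abs_of_nonneg (not_lt.mp h), one_mul]
  refine ⟨fun m => sgn (x m) * s (σ.symm m), absSorted_eq_of_abs_eq hs σ.symm fun m => ?_, ?_⟩
  · rw [abs_mul, hsgn_abs, one_mul, abs_of_nonneg (hs0 _)]
  · rw [← Equiv.sum_comp σ]
    refine sum_congr rfl fun k _ => ?_
    simp only [Equiv.symm_apply_apply, absSorted, σ]
    rw [mul_right_comm, hsgn_mul, mul_comm]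

end AbsSorted

theorem sum_mul_le_sum_mul_of_sum_Ici_le {n : ℕ} {a c d : Fin n → ℝ} (hd : Monotone d)
    (hd0 : ∀ k, 0 ≤ d k) (hac : ∀ i, ∑ k ≥ i, a k ≤ ∑ k ≥ i, c k) :
    ∑ k, a k * d k ≤ ∑ k, c k * d k := by
  induction n with
  | zero => simp
  | succ n ih =>
    have hsplit (f : Fin (n + 1) → ℝ) :
        ∑ k, f k * d k = d 0 * ∑ k ≥ 0, f k + ∑ k : Fin n, f k.succ * (d k.succ - d 0) := by
      have hshift : ∑ k, f k * (d k - d 0) = ∑ k : Fin n, f k.succ * (d k.succ - d 0) := by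
        simp [Fin.sum_univ_succ]
      rw [← hshift, show Ici (0 : Fin (n + 1)) = univ from Ici_bot, mul_sum, ← sum_add_distrib]
      exact sum_congr rfl fun k _ => by ring
    rw [hsplit a, hsplit c]
    gcongr ?_ + ?_
    · exact mul_le_mul_of_nonneg_left (hac 0) (hd0 0)
    · refine ih (fun p q hpq => ?_) (fun k => ?_) (fun i => ?_)
      · exact sub_le_sub_right (hd (Fin.succ_le_succ_iff.mpr hpq)) _
      · exact sub_nonneg.mpr (hd (Fin.zero_le _))
      · simpa only [Fin.sum_Ici_succ] using hac i.succ

section Coeff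

variable {n : ℕ} {g : ℝ → ℝ}

theorem natCast_div_mem_Icc {m : ℕ} (hm : m ≤ n) : (m : ℝ) / n ∈ Set.Icc (0 : ℝ) 1 :=
  ⟨by positivity, div_le_one_of_le₀ (by exact_mod_cast hm) n.cast_nonneg⟩

theorem apply_natCast_div_le (hg : MonotoneOn g (Set.Icc 0 1)) {p q : ℕ} (hpq : p ≤ q)
    (hq : q ≤ n) : g ((p : ℝ) / n) ≤ g ((q : ℝ) / n) :=
  hg (natCast_div_mem_Icc (hpq.trans hq)) (natCast_div_mem_Icc hq) (by gcongr)

theorem apply_natCast_div_lt_one (hg : StrictMonoOn g (Set.Icc 0 1)) (hg1 : g 1 = 1)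
    (i : Fin n) : g (((i : ℕ) : ℝ) / n) < 1 := by
  have hn : (0 : ℝ) < n := by have := i.pos; positivity
  refine hg1 ▸ hg (natCast_div_mem_Icc i.isLt.le) ⟨zero_le_one, le_rfl⟩ ?_
  exact (div_lt_one hn).mpr (by exact_mod_cast i.isLt)

theorem coeff_nonneg (hg : MonotoneOn g (Set.Icc 0 1)) (k : Fin n) : 0 ≤ coeff n g k := by
  have := apply_natCast_div_le hg (Nat.le_succ k) k.isLt
  rw [coeff, sub_nonneg]
  exact_mod_cast this

theorem sum_Ici_coeff (hg1 : g 1 = 1) (i : Fin n) :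
    ∑ k ≥ i, coeff n g k = 1 - g (((i : ℕ) : ℝ) / n) := by
  have hn : (n : ℝ) ≠ 0 := by have := i.pos; positivity
  have := sum_map (Ici i) Fin.valEmbedding fun m => g (((m + 1 : ℕ) : ℝ) / n) - g ((m : ℝ) / n)
  rw [Fin.map_valEmbedding_Ici, sum_Ico_sub (fun m : ℕ => g ((m : ℝ) / n)) i.isLt.le,
    div_self hn, hg1] at this
  simpa [coeff] using this.symm

theorem sum_coeff (hg0 : g 0 = 0) (hg1 : g 1 = 1) (hn : n ≠ 0) : ∑ k, coeff n g k = 1 := by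
  obtain ⟨n, rfl⟩ := Nat.exists_eq_succ_of_ne_zero hn
  simpa [hg0] using sum_Ici_coeff hg1 (0 : Fin (n + 1))

end Coeff

section ScaledGES

variable {n : ℕ} {g : ℝ → ℝ} {α : ℝ}

theorem sgesObj_zero_le_of_nonpos (hc1 : ∑ k, coeff n g k = 1) (hα0 : 0 ≤ α) (hα1 : α < 1)
    (z : Fin n → ℝ) {t : ℝ} (ht : t ≤ 0) : sgesObj g α z 0 ≤ sgesObj g α z t := by
  have hmax (k : Fin n) (s : ℝ) (hs : s ≤ 0) : max (absSorted z k - s) 0 = absSorted z k - s :=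
    max_eq_left (by linarith [absSorted_nonneg z k])
  have hobj (s : ℝ) (hs : s ≤ 0) :
      sgesObj g α z s = s + (1 - α)⁻¹ * (∑ k, coeff n g k * absSorted z k - s) := by
    simp only [sgesObj, hmax _ _ hs, mul_sub, sum_sub_distrib, ← sum_mul, hc1, one_mul]
  have hinv : 1 ≤ (1 - α)⁻¹ := one_le_inv₀ (by linarith) |>.mpr (by linarith)
  rw [hobj 0 le_rfl, hobj t ht]
  nlinarith

theorem sgesObj_nonneg (hc : ∀ k, 0 ≤ coeff n g k) (hc1 : ∑ k, coeff n g k = 1) (hα0 : 0 ≤ α)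
    (hα1 : α < 1) (z : Fin n → ℝ) (t : ℝ) : 0 ≤ sgesObj g α z t := by
  have h1α : 0 ≤ (1 - α)⁻¹ := inv_nonneg.mpr (by linarith)
  have hnonneg {s : ℝ} (hs : 0 ≤ s) : 0 ≤ sgesObj g α z s :=
    add_nonneg hs (mul_nonneg h1α (sum_nonneg fun k _ => mul_nonneg (hc k) (le_max_right _ _)))
  rcases le_total 0 t with ht | ht
  · exact hnonneg ht
  · exact (hnonneg le_rfl).trans (sgesObj_zero_le_of_nonpos hc1 hα0 hα1 z ht)

theorem sges_le_sgesObj (hc : ∀ k, 0 ≤ coeff n g k) (hc1 : ∑ k, coeff n g k = 1) (hα0 : 0 ≤ α)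
    (hα1 : α < 1) (z : Fin n → ℝ) (t : ℝ) : sges g α z ≤ sgesObj g α z t :=
  ciInf_le ⟨0, Set.forall_mem_range.mpr (sgesObj_nonneg hc hc1 hα0 hα1 z)⟩ t

/-- Split `|z|₍ₖ₎ = min(|z|₍ₖ₎, t) + (|z|₍ₖ₎ - t)₊`: the first part pairs with `x` to at most
`t ‖x‖₁`, the second is handled by summation by parts against the tails `∑ k ≥ i, coeff`. -/
theorem sum_absSorted_mul_le_mul_sgesObj (hg1 : g 1 = 1) (hα1 : α < 1) {x : Fin n → ℝ} {M : ℝ}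
    (hM : ∑ m, |x m| ≤ M)
    (htail : ∀ i : Fin n, (1 - α) * ∑ k ≥ i, absSorted x k ≤ M * (1 - g (((i : ℕ) : ℝ) / n)))
    (z : Fin n → ℝ) {t : ℝ} (ht : 0 ≤ t) :
    ∑ k, absSorted x k * absSorted z k ≤ M * sgesObj g α z t := by
  have h1α : 0 < 1 - α := sub_pos.mpr hα1
  set excess : Fin n → ℝ := fun k => max (absSorted z k - t) 0
  have hsplit : ∑ k, absSorted x k * absSorted z k
      = ∑ k, absSorted x k * min (absSorted z k) t + ∑ k, absSorted x k * excess k := by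
    rw [← sum_add_distrib]
    refine sum_congr rfl fun k _ => ?_
    rcases le_total (absSorted z k) t with h | h
    · rw [min_eq_left h, show excess k = 0 from max_eq_right (by linarith)]; ring
    · rw [min_eq_right h, show excess k = absSorted z k - t from max_eq_left (by linarith)]; ring
  have hlow : ∑ k, absSorted x k * min (absSorted z k) t ≤ M * t :=
    calc ∑ k, absSorted x k * min (absSorted z k) t ≤ ∑ k, absSorted x k * t :=
          sum_le_sum fun k _ => mul_le_mul_of_nonneg_left (min_le_right _ _) (absSorted_nonneg x k)
      _ ≤ M * t := by rw [← sum_mul, sum_absSorted]; exact mul_le_mul_of_nonneg_right hM ht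
  have hhigh : ∑ k, absSorted x k * excess k ≤ ∑ k, M / (1 - α) * coeff n g k * excess k := by
    refine sum_mul_le_sum_mul_of_sum_Ici_le (fun p q hpq => ?_) (fun k => le_max_right _ _)
      (fun i => ?_)
    · exact max_le_max (sub_le_sub_right (absSorted_monotone z hpq) t) le_rfl
    · rw [← mul_sum, sum_Ici_coeff hg1, div_mul_eq_mul_div, le_div_iff₀ h1α, mul_comm]
      exact htail i
  calc ∑ k, absSorted x k * absSorted z k
      ≤ M * t + ∑ k, M / (1 - α) * coeff n g k * excess k := by linarith
    _ = M * sgesObj g α z t := by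
      simp only [sgesObj, mul_assoc, ← mul_sum, excess]
      field_simp

theorem sum_mul_le_of_sges_le_one (hg1 : g 1 = 1) (hc1 : ∑ k, coeff n g k = 1) (hα0 : 0 ≤ α)
    (hα1 : α < 1) {x : Fin n → ℝ} {M : ℝ} (hM : ∑ m, |x m| ≤ M)
    (htail : ∀ i : Fin n, (1 - α) * ∑ k ≥ i, absSorted x k ≤ M * (1 - g (((i : ℕ) : ℝ) / n)))
    {z : Fin n → ℝ} (hz : sges g α z ≤ 1) : ∑ m, z m * x m ≤ M := by
  have hM0 : 0 ≤ M := (sum_nonneg fun m _ => abs_nonneg (x m)).trans hM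
  have hsges : ∑ k, absSorted x k * absSorted z k ≤ M * sges g α z := by
    rw [sges, Real.mul_iInf_of_nonneg hM0]
    refine le_ciInf fun t => ?_
    rcases le_total 0 t with ht | ht
    · exact sum_absSorted_mul_le_mul_sgesObj hg1 hα1 hM htail z ht
    · exact (sum_absSorted_mul_le_mul_sgesObj hg1 hα1 hM htail z le_rfl).trans
        (mul_le_mul_of_nonneg_left (sgesObj_zero_le_of_nonpos hc1 hα0 hα1 z ht) hM0)
  calc ∑ m, z m * x m ≤ ∑ k, absSorted x k * absSorted z k := sum_mul_le_sum_absSorted_mul x z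
    _ ≤ M * sges g α z := hsges
    _ ≤ M := mul_le_of_le_one_right hM0 hz

theorem exists_sges_le_one_sum_abs_eq (hc : ∀ k, 0 ≤ coeff n g k) (hc1 : ∑ k, coeff n g k = 1)
    (hα0 : 0 ≤ α) (hα1 : α < 1) (x : Fin n → ℝ) :
    ∃ z, sges g α z ≤ 1 ∧ ∑ m, |x m| = ∑ m, z m * x m := by
  obtain ⟨z, hz, hzx⟩ :=
    exists_absSorted_eq_and_sum_mul_eq x (s := fun _ => 1) monotone_const fun _ => zero_le_one
  refine ⟨z, (sges_le_sgesObj hc hc1 hα0 hα1 z 1).trans_eq ?_, ?_⟩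
  · simp [sgesObj, hz]
  · simp [hzx, sum_absSorted]

theorem exists_sges_le_one_tail_eq (hc : ∀ k, 0 ≤ coeff n g k) (hc1 : ∑ k, coeff n g k = 1)
    (hg1 : g 1 = 1) (hα0 : 0 ≤ α) (hα1 : α < 1) (x : Fin n → ℝ) (i : Fin n)
    (hi : g (((i : ℕ) : ℝ) / n) < 1) :
    ∃ z, sges g α z ≤ 1 ∧
      (1 - α) / (1 - g (((i : ℕ) : ℝ) / n)) * ∑ k ≥ i, absSorted x k = ∑ m, z m * x m := by
  set r := (1 - α) / (1 - g (((i : ℕ) : ℝ) / n))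
  have hr : 0 ≤ r := div_nonneg (by linarith) (by linarith)
  have hs : Monotone fun k => if i ≤ k then r else 0 := fun p q hpq => by
    beta_reduce
    split_ifs with hp hq <;> first | exact le_rfl | exact hr | exact absurd (hp.trans hpq) hq
  obtain ⟨z, hz, hzx⟩ := exists_absSorted_eq_and_sum_mul_eq x hs fun k => by
    split_ifs <;> first | exact hr | exact le_rfl
  refine ⟨z, (sges_le_sgesObj hc hc1 hα0 hα1 z 0).trans_eq ?_, ?_⟩
  · have hmax (k : Fin n) : max ((if i ≤ k then r else 0) - 0) 0 = if i ≤ k then r else 0 := by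
      split_ifs <;> simp [hr]
    have h1g : 1 - g (((i : ℕ) : ℝ) / n) ≠ 0 := by linarith
    have h1α : 1 - α ≠ 0 := by linarith
    simp only [sgesObj, hz, hmax, zero_add, mul_ite, mul_zero, ← sum_filter, filter_le_eq_Ici,
      ← sum_mul, sum_Ici_coeff hg1, r]
    field_simp
  · simp only [hzx, ite_mul, zero_mul, ← sum_filter, filter_le_eq_Ici, mul_sum]

end ScaledGES

-- The paper's 1-based indices `i ∈ {j+2, …, n}` are the 0-based `i ∈ {j+1, …, n-1}` here.
theorem stmt17_general (n : ℕ) (g : ℝ → ℝ)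
    (hg_mono : StrictMonoOn g (Set.Icc 0 1))
    (hg0 : g 0 = 0) (hg1 : g 1 = 1)
    (j : ℕ) (hj : j + 2 ≤ n) (α : ℝ)
    (hα1 : g ((j : ℝ) / n) ≤ α) (hα3 : α < 1)
    (x : Fin n → ℝ) :
    dualNorm (sges g α) x
      = max (∑ i, |x i|)
          (⨆ i : {i : Fin n // j + 1 ≤ (i : ℕ)},
            (1 - α) / (1 - g (((i.1 : ℕ) : ℝ) / n)) *
              ∑ k ∈ Finset.univ.filter (fun k : Fin n => (i.1 : ℕ) ≤ (k : ℕ)),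
                absSorted x k) := by
  have hg := hg_mono.monotoneOn
  have hc := coeff_nonneg hg (n := n)
  have hc1 := sum_coeff (n := n) hg0 hg1 (by omega)
  have hα0 : 0 ≤ α := by
    simpa [hg0] using (apply_natCast_div_le hg (Nat.zero_le j) (by omega)).trans hα1
  have hlt := apply_natCast_div_lt_one (n := n) hg_mono hg1
  have hIci (i : Fin n) : univ.filter (fun k : Fin n => (i : ℕ) ≤ (k : ℕ)) = Ici i :=
    filter_le_eq_Ici
  simp only [hIci]
  set T := fun i : {i : Fin n // j + 1 ≤ (i : ℕ)} =>
    (1 - α) / (1 - g (((i.1 : ℕ) : ℝ) / n)) * ∑ k ≥ i.1, absSorted x k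
  have : Nonempty {i : Fin n // j + 1 ≤ (i : ℕ)} := ⟨⟨⟨j + 1, by omega⟩, le_rfl⟩⟩
  refine IsGreatest.csSup_eq ⟨?_, ?_⟩
  · rcases le_total (∑ i, |x i|) (⨆ i, T i) with h | h
    · obtain ⟨i, hi⟩ := exists_eq_ciSup_of_finite (f := T)
      rw [max_eq_right h, ← hi]
      exact exists_sges_le_one_tail_eq hc hc1 hg1 hα0 hα3 x i.1 (hlt i.1)
    · rw [max_eq_left h]
      exact exists_sges_le_one_sum_abs_eq hc hc1 hα0 hα3 x
  · rintro _ ⟨z, hz, rfl⟩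
    refine sum_mul_le_of_sges_le_one hg1 hc1 hα0 hα3 (le_max_left _ _) (fun i => ?_) hz
    by_cases hi : j + 1 ≤ (i : ℕ)
    · have hTi : (1 - α) / (1 - g (((i : ℕ) : ℝ) / n)) * ∑ k ≥ i, absSorted x k
          ≤ max (∑ m, |x m|) (⨆ i, T i) :=
        (le_ciSup (Finite.bddAbove_range T) ⟨i, hi⟩).trans (le_max_right _ _)
      rwa [div_mul_eq_mul_div, div_le_iff₀ (sub_pos.mpr (hlt i))] at hTi
    · have hgi := (apply_natCast_div_le hg (by omega : (i : ℕ) ≤ j) (by omega)).trans hα1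
      exact one_sub_mul_sum_Ici_absSorted_le x i (le_max_left _ _) hgi hα3.le

/-- dual norm of the scaled generalized-ES norm for a strictly
increasing convex distortion function and `α ∈ [α_j, α_{j+1}]`, `j = 0,…,n-2`,
`α < 1`:
`⟨⟨x⟩⟩* = max{ ‖x‖₁, max_{j+2 ≤ i ≤ n} (1-α)/(1-g((i-1)/n)) ∑_{k=i}^n |x|₍ₖ₎ }`
(the paper's 1-based index `i ∈ {j+2,…,n}` is the 0-based index `i ∈ {j+1,…,n-1}`,
so `g((i-1)/n)` becomes `g(i/n)` with the 0-based `i`). -/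
theorem stmt17 (n : ℕ) (hn : 1 ≤ n) (g : ℝ → ℝ)
    (hg_mono : StrictMonoOn g (Set.Icc 0 1)) (hg_conv : ConvexOn ℝ (Set.Icc 0 1) g)
    (hg0 : g 0 = 0) (hg1 : g 1 = 1)
    (j : ℕ) (hj : j + 2 ≤ n) (α : ℝ)
    (hα1 : g ((j : ℝ) / n) ≤ α) (hα2 : α ≤ g (((j : ℝ) + 1) / n)) (hα3 : α < 1)
    (x : Fin n → ℝ) :
    dualNorm (sges g α) x
      = max (∑ i, |x i|)
          (⨆ i : {i : Fin n // j + 1 ≤ (i : ℕ)},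
            (1 - α) / (1 - g (((i.1 : ℕ) : ℝ) / n)) *
              ∑ k ∈ Finset.univ.filter (fun k : Fin n => (i.1 : ℕ) ≤ (k : ℕ)),
                absSorted x k) :=
  stmt17_general n g hg_mono hg0 hg1 j hj α hα1 hα3 x
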